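/- For any odd prime p and any integer d > p², the ℚ-linear span of the set {θ^{(p,d)}_{a,b} : a, b ∈ ℤ}, viewed inside the ℚ-vector space ℚ[[q]] of formal power series, has dimension exactly (p+1)²/4. -/

import Mathlib

noncomputable section

/-- The positive definite quadratic form `Q_d(x,y) = x² + xy + d y²`. -/
def Qform (d : ℕ) (x y : ℤ) : ℤ := x ^ 2 + x * y + (d : ℤ) * y ^ 2

/-- The coset theta series `θ^{(p,d)}_{a,b}`. -/
def cosetTheta (p d : ℕ) (a b : ℤ) : PowerSeries ℤ :=
  PowerSeries.mk fun k =>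
    (Set.ncard {mn : ℤ × ℤ |
      Qform d ((p : ℤ) * mn.1 + a) ((p : ℤ) * mn.2 + b) = (k : ℤ)} : ℤ)

/-- The coset theta series viewed in `ℚ[[q]]`. -/
def cosetThetaQ (p d : ℕ) (a b : ℤ) : PowerSeries ℚ :=
  PowerSeries.map (Int.castRingHom ℚ) (cosetTheta p d a b)

/-!
`θ_{a,b}` only depends on `(a, b)` modulo `p` and is invariant under `(a, b) ↦ (-a, -b)` and
`(a, b) ↦ (-a - b, b)`, which preserve `Q_d`. Writing `p = 2r + 1`, these symmetries move every
coset to one of the `(r + 1)²` representatives `v = (i - ⌊j/2⌋, j)` with `0 ≤ i, j ≤ r`, for which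
`|2x + y| ≤ p`. Since `4 Q_d(X, Y) = (2X + Y)² + (4d - 1) Y²` and `d > p²`, every `(X, Y)` with
`Q_d(X, Y) = Q_d(v)` has `|Y| ≤ j`; this forces the coefficient of `q^{Q_d(v)}` to vanish in the
series of every other representative whose second coordinate is at least `j`, while it is
positive in `θ_v`. So the representatives are triangular with respect to these coefficients,
hence linearly independent.
-/

theorem linearIndependent_of_triangular {R M ι α : Type*} [Ring R] [NoZeroDivisors R]
    [AddCommGroup M] [Module R M] [Preorder α] [WellFoundedLT α]
    (v : ι → M) (f : ι → M →ₗ[R] R) (rk : ι → α) (hdiag : ∀ i, f i (v i) ≠ 0)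
    (htri : ∀ i j, j ≠ i → ¬ rk j < rk i → f i (v j) = 0) :
    LinearIndependent R v := by
  rw [linearIndependent_iff']
  intro s g hg
  suffices ∀ a : α, ∀ i ∈ s, rk i = a → g i = 0 from fun i hi => this _ i hi rfl
  intro a
  induction a using WellFoundedLT.induction with
  | _ a ih =>
    rintro i hi rfl
    have hfi := congrArg (f i) hg
    simp only [map_sum, map_smul, smul_eq_mul, map_zero] at hfi
    rw [Finset.sum_eq_single_of_mem i hi fun j hj hji => ?_] at hfi
    · exact (mul_eq_zero.mp hfi).resolve_right (hdiag i)
    · by_cases hlt : rk j < rk i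
      · rw [ih _ hlt j hj rfl, zero_mul]
      · rw [htri i j hji hlt, mul_zero]

lemma Qform_nonneg {d : ℕ} (hd : 1 ≤ d) (x y : ℤ) : 0 ≤ Qform d x y := by
  have hd' : (1 : ℤ) ≤ d := by exact_mod_cast hd
  unfold Qform
  nlinarith [sq_nonneg (2 * x + y), sq_nonneg y]

lemma finite_setOf_Qform_eq {d : ℕ} (hd : 1 ≤ d) (k : ℤ) :
    {v : ℤ × ℤ | Qform d v.1 v.2 = k}.Finite := by
  have hd' : (1 : ℤ) ≤ d := by exact_mod_cast hd
  refine (Set.finite_Icc (-2 * k, -2 * k) (2 * k, 2 * k)).subset fun v hv => ?_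
  simp only [Set.mem_ofPred_eq, Qform] at hv
  have hx : v.1 ^ 2 ≤ 2 * k := by nlinarith [sq_nonneg (v.1 + v.2), sq_nonneg v.2]
  have hy : v.2 ^ 2 ≤ 2 * k := by nlinarith [sq_nonneg (v.1 + v.2), sq_nonneg v.1]
  simp only [Set.mem_Icc]
  refine ⟨⟨?_, ?_⟩, ?_, ?_⟩ <;> nlinarith

lemma finite_setOf_Qform_coset_eq {p d : ℕ} (hp : p ≠ 0) (hd : 1 ≤ d) (a b k : ℤ) :
    {v : ℤ × ℤ | Qform d (p * v.1 + a) (p * v.2 + b) = k}.Finite := by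
  have hp' : (p : ℤ) ≠ 0 := by exact_mod_cast hp
  refine (finite_setOf_Qform_eq hd k).preimage (f := fun v : ℤ × ℤ => (p * v.1 + a, p * v.2 + b)) ?_
  intro v _ w _ hvw
  simp only [Prod.mk.injEq, add_left_inj, mul_right_inj' hp'] at hvw
  exact Prod.ext hvw.1 hvw.2

lemma coeff_cosetThetaQ (p d : ℕ) (a b : ℤ) (k : ℕ) :
    PowerSeries.coeff k (cosetThetaQ p d a b) =
      {v : ℤ × ℤ | Qform d (p * v.1 + a) (p * v.2 + b) = k}.ncard := by
  simp [cosetThetaQ, cosetTheta]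

lemma cosetTheta_eq_of_equiv {p d : ℕ} {a b a' b' : ℤ} (e : ℤ × ℤ ≃ ℤ × ℤ)
    (he : ∀ v : ℤ × ℤ, Qform d (p * (e v).1 + a) (p * (e v).2 + b) =
      Qform d (p * v.1 + a') (p * v.2 + b')) :
    cosetTheta p d a' b' = cosetTheta p d a b := by
  ext k
  simp only [cosetTheta, PowerSeries.coeff_mk]
  conv_rhs => rw [← Set.ncard_preimage_of_injective_subset_range e.injective (by simp)]
  simp only [Set.preimage_ofPred_eq, he]

lemma cosetTheta_congr_modEq {p d : ℕ} {a a' b b' : ℤ} (ha : a ≡ a' [ZMOD p])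
    (hb : b ≡ b' [ZMOD p]) : cosetTheta p d a b = cosetTheta p d a' b' := by
  obtain ⟨u, hu⟩ := ha.dvd
  obtain ⟨w, hw⟩ := hb.dvd
  refine (cosetTheta_eq_of_equiv (Equiv.addRight (u, w)) fun v => ?_).symm
  simp only [Equiv.coe_addRight, Prod.fst_add, Prod.snd_add]
  congr 1 <;> linarith

lemma cosetTheta_neg (p d : ℕ) (a b : ℤ) : cosetTheta p d (-a) (-b) = cosetTheta p d a b := by
  refine cosetTheta_eq_of_equiv (Equiv.neg _) fun v => ?_
  simp only [Equiv.neg_apply, Prod.fst_neg, Prod.snd_neg, Qform]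
  ring

lemma cosetTheta_neg_sub (p d : ℕ) (a b : ℤ) : cosetTheta p d (-a - b) b = cosetTheta p d a b := by
  let σ : ℤ × ℤ → ℤ × ℤ := fun v => (-v.1 - v.2, v.2)
  have hσ : Function.Involutive σ := fun v => by simp [σ]
  refine cosetTheta_eq_of_equiv (hσ.toPerm σ) fun v => ?_
  simp only [Function.Involutive.coe_toPerm, σ, Qform]
  ring

lemma exists_cosetTheta_eq_snd_le {p r : ℕ} (d : ℕ) (hpr : p = 2 * r + 1) (a b : ℤ) :
    ∃ a' b' : ℤ, 0 ≤ b' ∧ b' ≤ r ∧ cosetTheta p d a' b' = cosetTheta p d a b := by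
  have hp : (0 : ℤ) < p := by omega
  have hb₀ := Int.emod_nonneg b hp.ne'
  have hb₁ := Int.emod_lt_of_pos b hp
  have hmod : cosetTheta p d a (b % p) = cosetTheta p d a b :=
    cosetTheta_congr_modEq Int.ModEq.rfl (Int.mod_modEq b p)
  by_cases hbr : b % p ≤ r
  · exact ⟨a, b % p, hb₀, hbr, hmod⟩
  · refine ⟨-a, p - b % p, by omega, by omega, ?_⟩
    have hneg : p - b % p ≡ -(b % p) [ZMOD p] := Int.modEq_iff_dvd.mpr ⟨-1, by ring⟩
    rw [cosetTheta_congr_modEq Int.ModEq.rfl hneg, cosetTheta_neg, hmod]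

lemma exists_cosetTheta_eq_two_mul_fst_add_snd_le {p : ℕ} (d : ℕ) (hp : 0 < p) (a b : ℤ) :
    ∃ a' : ℤ, 0 ≤ 2 * a' + b ∧ 2 * a' + b ≤ p ∧ cosetTheta p d a' b = cosetTheta p d a b := by
  have hp' : (0 : ℤ) < 2 * p := by omega
  set a₁ := a - p * ((2 * a + b) / (2 * p))
  have ht : 2 * a₁ + b = (2 * a + b) % (2 * p) := by rw [Int.emod_def]; ring
  have ht₀ := Int.emod_nonneg (2 * a + b) hp'.ne'
  have ht₁ := Int.emod_lt_of_pos (2 * a + b) hp'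
  have h₁ : cosetTheta p d a₁ b = cosetTheta p d a b :=
    cosetTheta_congr_modEq (Int.modEq_iff_dvd.mpr ⟨(2 * a + b) / (2 * p), by ring⟩) Int.ModEq.rfl
  by_cases htp : 2 * a₁ + b ≤ p
  · exact ⟨a₁, by omega, htp, h₁⟩
  · refine ⟨p - a₁ - b, by omega, by omega, ?_⟩
    have hshift : p - a₁ - b ≡ -a₁ - b [ZMOD p] := Int.modEq_iff_dvd.mpr ⟨-1, by ring⟩
    rw [cosetTheta_congr_modEq hshift Int.ModEq.rfl, cosetTheta_neg_sub, h₁]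

def reducedRep (i j : ℕ) : ℤ × ℤ := ((i : ℤ) - (j : ℤ) / 2, j)

def thetaRep (p d r : ℕ) (ij : Fin (r + 1) × Fin (r + 1)) : PowerSeries ℚ :=
  cosetThetaQ p d (reducedRep ij.1 ij.2).1 (reducedRep ij.1 ij.2).2

lemma exists_thetaRep_eq {p r : ℕ} (d : ℕ) (hpr : p = 2 * r + 1) (a b : ℤ) :
    ∃ ij, thetaRep p d r ij = cosetThetaQ p d a b := by
  obtain ⟨a₁, b₁, hb₀, hbr, h₁⟩ := exists_cosetTheta_eq_snd_le d hpr a b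
  obtain ⟨a₂, ht₀, htp, h₂⟩ := exists_cosetTheta_eq_two_mul_fst_add_snd_le (p := p) d (by omega) a₁ b₁
  refine ⟨(⟨(a₂ + b₁ / 2).toNat, by omega⟩, ⟨b₁.toNat, by omega⟩), ?_⟩
  have hrep : reducedRep (a₂ + b₁ / 2).toNat b₁.toNat = (a₂, b₁) := by
    simp only [reducedRep, Prod.mk.injEq]; omega
  simp only [thetaRep, hrep, cosetThetaQ, h₂, h₁]

lemma sq_le_sq_of_Qform_eq {d : ℕ} {x₀ y₀ X Y : ℤ} (h : (2 * x₀ + y₀) ^ 2 < 4 * d - 1)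
    (hQ : Qform d X Y = Qform d x₀ y₀) : Y ^ 2 ≤ y₀ ^ 2 := by
  have key : (4 * (d : ℤ) - 1) * (Y ^ 2 - y₀ ^ 2) = (2 * x₀ + y₀) ^ 2 - (2 * X + Y) ^ 2 := by
    unfold Qform at hQ
    linear_combination 4 * hQ
  by_contra! hlt
  nlinarith [sq_nonneg (2 * X + Y), sq_nonneg (2 * x₀ + y₀)]

lemma eq_or_eq_neg_sub_of_Qform_eq {d : ℕ} {X x y : ℤ} (hQ : Qform d X y = Qform d x y) :
    X = x ∨ X = -x - y := by
  have h : (X - x) * (X + x + y) = 0 := by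
    unfold Qform at hQ
    linear_combination hQ
  rcases mul_eq_zero.mp h with h | h
  · exact Or.inl (by linarith)
  · exact Or.inr (by linarith)

lemma reducedRep_eq_of_Qform_eq {p r d : ℕ} (hpr : p = 2 * r + 1) (hd : p ^ 2 < d)
    {i j i' j' : ℕ} (hi : i ≤ r) (hi' : i' ≤ r) (hj' : j' ≤ r) (hjj' : j ≤ j') {m n : ℤ}
    (hQ : Qform d (p * m + (reducedRep i' j').1) (p * n + (reducedRep i' j').2) =
      Qform d (reducedRep i j).1 (reducedRep i j).2) :
    i' = i ∧ j' = j := by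
  simp only [reducedRep] at hQ
  have hdZ : (p : ℤ) ^ 2 < d := by exact_mod_cast hd
  have hp : (p : ℤ) = 2 * r + 1 := by exact_mod_cast hpr
  have ht : (2 * ((i : ℤ) - (j : ℤ) / 2) + j) ^ 2 < 4 * d - 1 := by
    have : (2 * ((i : ℤ) - (j : ℤ) / 2) + j) ^ 2 ≤ (p : ℤ) ^ 2 :=
      sq_le_sq' (by omega) (by omega)
    omega
  have hY := abs_le_of_sq_le_sq' (sq_le_sq_of_Qform_eq ht hQ) (Int.natCast_nonneg j)
  have hn : (p : ℤ) * n = 0 :=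
    Int.eq_zero_of_abs_lt_dvd (dvd_mul_right _ _) (abs_lt.mpr ⟨by omega, by omega⟩)
  obtain rfl : j' = j := by omega
  rw [hn, zero_add] at hQ
  refine ⟨?_, rfl⟩
  rcases eq_or_eq_neg_sub_of_Qform_eq hQ with hX | hX
  · have hm : (p : ℤ) * m = 0 :=
      Int.eq_zero_of_abs_lt_dvd (dvd_mul_right _ _) (abs_lt.mpr ⟨by omega, by omega⟩)
    omega
  · -- `-(p * m) = i + i' + j % 2 ∈ [0, p]`, so `i = i' = 0` or `i = i' = r`
    have hm : -((p : ℤ) * m) = 0 ∨ -((p : ℤ) * m) = p := by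
      by_cases hlt : -((p : ℤ) * m) < p
      · exact Or.inl (Int.eq_zero_of_dvd_of_nonneg_of_lt (by omega) hlt
          (dvd_neg.mpr (dvd_mul_right _ _)))
      · right; omega
    omega

lemma linearIndependent_thetaRep {p r d : ℕ} (hpr : p = 2 * r + 1) (hd : p ^ 2 < d) :
    LinearIndependent ℚ (thetaRep p d r) := by
  have hd₁ : 1 ≤ d := by nlinarith
  let level (ij : Fin (r + 1) × Fin (r + 1)) : ℕ :=
    (Qform d (reducedRep ij.1 ij.2).1 (reducedRep ij.1 ij.2).2).toNat
  have hlevel (ij : Fin (r + 1) × Fin (r + 1)) :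
      (level ij : ℤ) = Qform d (reducedRep ij.1 ij.2).1 (reducedRep ij.1 ij.2).2 :=
    Int.toNat_of_nonneg (Qform_nonneg hd₁ _ _)
  refine linearIndependent_of_triangular _ (fun ij => PowerSeries.coeff (level ij))
    (fun ij => (ij.2 : ℕ)) (fun ij => ?_) (fun ij ij' hne hle => ?_)
  · simp only [thetaRep, coeff_cosetThetaQ, hlevel, ne_eq, Nat.cast_eq_zero]
    refine ((Set.ncard_pos (finite_setOf_Qform_coset_eq (by omega) hd₁ _ _ _)).mpr
      ⟨(0, 0), by simp⟩).ne'
  · simp only [thetaRep, coeff_cosetThetaQ, hlevel, Nat.cast_eq_zero]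
    rw [Set.ncard_eq_zero (finite_setOf_Qform_coset_eq (by omega) hd₁ _ _ _)]
    refine Set.eq_empty_iff_forall_notMem.mpr fun mn hmn => hne ?_
    obtain ⟨hi, hj⟩ := reducedRep_eq_of_Qform_eq hpr hd (Nat.lt_succ_iff.mp ij.1.2)
      (Nat.lt_succ_iff.mp ij'.1.2) (Nat.lt_succ_iff.mp ij'.2.2) (not_lt.mp hle) hmn
    exact Prod.ext (Fin.ext hi) (Fin.ext hj)

theorem stmt4_general (p : ℕ) (hodd : Odd p) (d : ℕ) (hd : p ^ 2 < d) :
    Module.finrank ℚ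
      (Submodule.span ℚ (Set.range fun ab : ℤ × ℤ => cosetThetaQ p d ab.1 ab.2)) =
      (p + 1) ^ 2 / 4 := by
  obtain ⟨r, hr⟩ := hodd
  have hrange : Set.range (fun ab : ℤ × ℤ => cosetThetaQ p d ab.1 ab.2) =
      Set.range (thetaRep p d r) := by
    refine (Set.range_subset_iff.mpr fun ab => ?_).antisymm
      (Set.range_subset_iff.mpr fun ij => ⟨reducedRep ij.1 ij.2, rfl⟩)
    exact exists_thetaRep_eq d hr ab.1 ab.2
  rw [hrange, finrank_span_eq_card (linearIndependent_thetaRep hr hd), Fintype.card_prod,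
    Fintype.card_fin, hr, show (2 * r + 1 + 1) ^ 2 = 4 * ((r + 1) * (r + 1)) by ring,
    Nat.mul_div_cancel_left _ four_pos]

theorem stmt4 (p : ℕ) (hp : p.Prime) (hodd : Odd p) (d : ℕ) (hd : p ^ 2 < d) :
    Module.finrank ℚ
      (Submodule.span ℚ (Set.range fun ab : ℤ × ℤ => cosetThetaQ p d ab.1 ab.2)) =
      (p + 1) ^ 2 / 4 :=
  stmt4_general p hodd d hd
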